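/- For all real x₁, x₃, the 3×3 real matrix P with columns (1, u, E)ᵀ, (x₁, 1 + u·x₁, x₃)ᵀ, (0, 0, 1)ᵀ satisfies det P = 1 (hence P is invertible) and A_c^ZB·P = P·J, where J is the Jordan matrix with rows (u, 1, 0), (0, u, 0), (0, 0, u); equivalently P⁻¹·A_c^ZB·P = J. -/
import Mathlib


/-- The Zha–Bilgen convection flux Jacobian of the 1-D Euler system. -/
noncomputable def AcZB (u E : ℝ) : Matrix (Fin 3) (Fin 3) ℝ :=
  !![0, 1, 0;
     -u^2, 2*u, 0;
     -u*E, E, u]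

/-- For all real `x₁, x₃`, the matrix `P` with columns `(1,u,E)`, `(x₁, 1+u·x₁, x₃)`,
`(0,0,1)` has determinant 1 and conjugates `A_c^ZB` to the Jordan matrix `J` with rows
`(u,1,0), (0,u,0), (0,0,u)`. -/
theorem jordan_form_AcZB (u E x₁ x₃ : ℝ) :
    let P : Matrix (Fin 3) (Fin 3) ℝ :=
      !![1, x₁, 0;
         u, 1 + u*x₁, 0;
         E, x₃, 1]
    let J : Matrix (Fin 3) (Fin 3) ℝ :=
      !![u, 1, 0;
         0, u, 0;
         0, 0, u]
    P.det = 1 ∧ AcZB u E * P = P * J ∧ P⁻¹ * AcZB u E * P = J := by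
  intro P J
  have hdet : P.det = 1 := by
    simp [P, Matrix.det_fin_three]; ring
  have hmul : AcZB u E * P = P * J := by
    ext i j
    fin_cases i <;> fin_cases j <;>
      simp [AcZB, P, J, Matrix.mul_apply, Fin.sum_univ_three, Matrix.vecHead, Matrix.vecTail] <;> ring
  refine ⟨hdet, hmul, ?_⟩
  have hinv : IsUnit P.det := by rw [hdet]; exact isUnit_one
  rw [Matrix.mul_assoc, hmul, ← Matrix.mul_assoc, Matrix.nonsing_inv_mul P hinv, Matrix.one_mul]
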